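/- arXiv:2309.11401 — 3 statements merged into one kernel-verified Lean document; each statement's English description precedes it below -/
import Mathlib

section
/- First-order condition for the NPMLE: fix observations y₁, …, y_n ∈ ℝ and let Ĝ be a Borel probability measure on [-c, c] maximizing G ↦ ∑_{i=1}^n log ∫ e^{−(yᵢ−θ)²/(2σ²)} dG(θ) over all Borel probability measures on [-c, c], and write f_Ĝ(y) = (1/σ) ∫ φ((y−θ)/σ) dĜ(θ). If θ₀ ∈ (−c, c) belongs to the support of Ĝ, then ∑_{i=1}^n ((yᵢ − θ₀)/f_Ĝ(yᵢ)) · e^{−(yᵢ−θ₀)²/(2σ²)} = 0. -/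
open MeasureTheory Set

/-- The standard normal density `φ(z) = (2π)^{-1/2} e^{-z²/2}`. -/
noncomputable def stdNormalPDF (z : ℝ) : ℝ := (Real.sqrt (2 * Real.pi))⁻¹ * Real.exp (-z ^ 2 / 2)

/-- The mixture (marginal) density `f_G(y) = (1/σ) ∫ φ((y−θ)/σ) dG(θ)`. -/
noncomputable def mixDens (σ : ℝ) (G : MeasureTheory.Measure ℝ) (y : ℝ) : ℝ :=
  (1 / σ) * ∫ t, stdNormalPDF ((y - t) / σ) ∂G

/-- The (topological) support of a measure on `ℝ`: the set of points all of whose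
neighborhoods have positive measure. -/
def measureSupport (μ : MeasureTheory.Measure ℝ) : Set ℝ :=
  {x : ℝ | ∀ U ∈ nhds x, μ U ≠ 0}

/-- auxiliary kernel -/
noncomputable def npmleAux.bb (σ yi θ : ℝ) : ℝ := Real.exp (-(yi - θ) ^ 2 / (2 * σ ^ 2))

namespace npmleAux

lemma bb_pos (σ yi θ : ℝ) : 0 < bb σ yi θ := Real.exp_pos _

lemma bb_le_one (σ yi θ : ℝ) : bb σ yi θ ≤ 1 := by
  rw [bb, Real.exp_le_one_iff]
  apply div_nonpos_of_nonpos_of_nonneg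
  · simp [neg_nonpos]; positivity
  · positivity

lemma bb_cont (σ yi : ℝ) : Continuous (bb σ yi) := by
  unfold bb; fun_prop

lemma bb_integrable (σ yi : ℝ) (μ : Measure ℝ) [IsFiniteMeasure μ] :
    Integrable (bb σ yi) μ := by
  refine Integrable.mono' (integrable_const 1) (bb_cont σ yi).aestronglyMeasurable ?_
  filter_upwards with θ
  rw [Real.norm_eq_abs, abs_of_pos (bb_pos σ yi θ)]
  exact bb_le_one σ yi θ

lemma bb_hasDerivAt (σ yi θ₀ : ℝ) (hσ : σ ≠ 0) :
    HasDerivAt (fun θ => bb σ yi θ) (bb σ yi θ₀ * ((yi - θ₀) / σ ^ 2)) θ₀ := by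
  have h1 : HasDerivAt (fun θ : ℝ => yi - θ) (-1) θ₀ := by
    simpa using (hasDerivAt_id θ₀).const_sub yi
  have h2 := (((h1.fun_pow 2).fun_neg).div_const (2 * σ ^ 2)).exp
  convert h2 using 1
  all_goals simp only [bb]
  field_simp
  ring

end npmleAux

open npmleAux

/-- **First-order condition for the NPMLE**: if `θ₀ ∈ (−c, c)` belongs to the support of a
maximizer `Ĝ` of the log-likelihood, then
`∑ᵢ ((yᵢ − θ₀)/f_Ĝ(yᵢ)) e^{−(yᵢ−θ₀)²/(2σ²)} = 0`. -/
theorem npmle_first_order_condition (σ c : ℝ) (hσ : 0 < σ) (hc : 0 < c)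
    (n : ℕ) (hn : 0 < n) (y : Fin n → ℝ)
    (Ghat : Measure ℝ) [IsProbabilityMeasure Ghat] (hGhatSupp : ∀ᵐ t ∂Ghat, t ∈ Icc (-c) c)
    (hMLE : ∀ (G : Measure ℝ), IsProbabilityMeasure G → (∀ᵐ t ∂G, t ∈ Icc (-c) c) →
      ∑ i, Real.log (∫ t, Real.exp (-(y i - t) ^ 2 / (2 * σ ^ 2)) ∂G)
        ≤ ∑ i, Real.log (∫ t, Real.exp (-(y i - t) ^ 2 / (2 * σ ^ 2)) ∂Ghat))
    (θ₀ : ℝ) (hθ₀ : θ₀ ∈ Ioo (-c) c) (hθ₀supp : θ₀ ∈ measureSupport Ghat) :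
    ∑ i, ((y i - θ₀) / mixDens σ Ghat (y i)) * Real.exp (-(y i - θ₀) ^ 2 / (2 * σ ^ 2)) = 0 := by
  classical
  -- notation
  set a : Fin n → ℝ := fun i => ∫ t, bb σ (y i) t ∂Ghat with hadef
  have hMLE' : ∀ (G : Measure ℝ), IsProbabilityMeasure G → (∀ᵐ t ∂G, t ∈ Icc (-c) c) →
      ∑ i, Real.log (∫ t, bb σ (y i) t ∂G) ≤ ∑ i, Real.log (a i) := by
    intro G hG hGsupp
    simpa [bb, hadef] using hMLE G hG hGsupp
  have hapos : ∀ i, 0 < a i := by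
    intro i
    rw [hadef]
    rw [integral_pos_iff_support_of_nonneg (fun θ => (bb_pos σ (y i) θ).le)
      (bb_integrable σ (y i) Ghat)]
    have hs : Function.support (bb σ (y i)) = Set.univ := by
      ext θ; simp [Function.mem_support, (bb_pos σ (y i) θ).ne']
    rw [hs]
    simp
  set D : ℝ → ℝ := fun θ => (∑ i, bb σ (y i) θ / a i) - n with hDdef
  have hDcont : Continuous D := by
    rw [hDdef]
    exact (continuous_finset_sum _ (fun i _ => (bb_cont σ (y i)).div_const _)).sub
      continuous_const
  -- step: D ≤ 0 on Icc
  have hDle : ∀ θ ∈ Icc (-c) c, D θ ≤ 0 := by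
    intro θ hθIcc
    set g : ℝ → ℝ := fun ε => ∑ i, Real.log ((1 - ε) * a i + ε * bb σ (y i) θ) with hgdef
    have hg0 : g 0 = ∑ i, Real.log (a i) := by simp [hgdef]
    have hgle : ∀ ε ∈ Ioo (0:ℝ) 1, g ε ≤ g 0 := by
      intro ε hε
      have h1ε : (0:ℝ) ≤ 1 - ε := by linarith [hε.2]
      have hε0 : (0:ℝ) ≤ ε := hε.1.le
      set μ : Measure ℝ := ENNReal.ofReal (1 - ε) • Ghat + ENNReal.ofReal ε • Measure.dirac θ
        with hμdef
      have hμprob : IsProbabilityMeasure μ := by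
        constructor
        rw [hμdef]
        simp only [Measure.add_apply, Measure.smul_apply, measure_univ, smul_eq_mul, mul_one]
        rw [← ENNReal.ofReal_add h1ε hε0]
        norm_num
      have hμsupp : ∀ᵐ t ∂μ, t ∈ Icc (-c) c := by
        rw [ae_iff] at hGhatSupp ⊢
        have hdir : Measure.dirac θ {t | ¬ t ∈ Icc (-c) c} = 0 := by
          rw [show {t | ¬ t ∈ Icc (-c) c} = (Icc (-c) c)ᶜ from rfl,
            Measure.dirac_apply' _ measurableSet_Icc.compl]
          simp [Set.indicator, hθIcc.1, hθIcc.2]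
        rw [hμdef, Measure.add_apply, Measure.smul_apply, Measure.smul_apply,
          hGhatSupp, hdir]
        simp
      have hμint : ∀ i, ∫ t, bb σ (y i) t ∂μ = (1 - ε) * a i + ε * bb σ (y i) θ := by
        intro i
        rw [hμdef, integral_add_measure
          ((bb_integrable σ (y i) Ghat).smul_measure ENNReal.ofReal_ne_top)
          ((bb_integrable σ (y i) (Measure.dirac θ)).smul_measure ENNReal.ofReal_ne_top),
          integral_smul_measure, integral_smul_measure, integral_dirac,
          ENNReal.toReal_ofReal h1ε, ENNReal.toReal_ofReal hε0]
        simp [hadef, smul_eq_mul]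
      have := hMLE' μ hμprob hμsupp
      rw [hg0, hgdef]
      simpa [hμint] using this
    -- derivative of g at 0
    have hgderiv : HasDerivAt g (∑ i, (bb σ (y i) θ - a i) / a i) 0 := by
      rw [hgdef]
      apply HasDerivAt.fun_sum
      intro i _
      have hu : HasDerivAt (fun ε : ℝ => (1 - ε) * a i + ε * bb σ (y i) θ)
          (bb σ (y i) θ - a i) 0 := by
        have h1 : HasDerivAt (fun ε : ℝ => (1 - ε) * a i) (-(a i)) 0 := by
          simpa using (((hasDerivAt_id (0:ℝ)).const_sub 1).mul_const (a i))
        have h2 : HasDerivAt (fun ε : ℝ => ε * bb σ (y i) θ) (bb σ (y i) θ) 0 := by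
          simpa using (hasDerivAt_id (0:ℝ)).mul_const (bb σ (y i) θ)
        have := h1.fun_add h2
        convert this using 1
        · rfl
        · rfl
        ring
      have hu0 : (1 - (0:ℝ)) * a i + 0 * bb σ (y i) θ ≠ 0 := by
        simp [(hapos i).ne']
      have := hu.log hu0
      convert this using 1
      · rfl
      · rfl
      simp
    have hL : Filter.Tendsto (slope g 0) (nhdsWithin 0 (Set.Ioi 0))
        (nhds (∑ i, (bb σ (y i) θ - a i) / a i)) :=
      (hasDerivAt_iff_tendsto_slope.mp hgderiv).mono_left
        (nhdsWithin_mono 0 (fun x hx => ne_of_gt hx))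
    have hLle : (∑ i, (bb σ (y i) θ - a i) / a i) ≤ 0 := by
      refine le_of_tendsto hL ?_
      filter_upwards [Ioo_mem_nhdsGT_of_mem (show (0:ℝ) ∈ Ico (0:ℝ) 1 by constructor <;> norm_num)]
        with ε hε
      rw [slope_def_field]
      apply div_nonpos_of_nonpos_of_nonneg
      · linarith [hgle ε hε]
      · linarith [hε.1]
    calc D θ = ∑ i, (bb σ (y i) θ - a i) / a i := by
          rw [hDdef]
          simp only
          rw [Finset.sum_congr rfl (fun i _ => sub_div (bb σ (y i) θ) (a i) (a i)),
            Finset.sum_sub_distrib]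
          rw [Finset.sum_congr rfl (fun i _ => div_self (hapos i).ne')]
          simp
      _ ≤ 0 := hLle
  -- step: ∫ D = 0
  have hDint : Integrable D Ghat := by
    rw [hDdef]
    exact (integrable_finset_sum _ (fun i _ => (bb_integrable σ (y i) Ghat).div_const _)).sub
      (integrable_const _)
  have hDzeroint : ∫ θ, D θ ∂Ghat = 0 := by
    rw [hDdef]
    simp only
    rw [integral_sub (integrable_finset_sum _
        (fun i _ => (bb_integrable σ (y i) Ghat).div_const _)) (integrable_const _),
      integral_finset_sum _ (fun i _ => (bb_integrable σ (y i) Ghat).div_const _)]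
    simp only [integral_div]
    rw [Finset.sum_congr rfl (fun i _ => div_self (hapos i).ne')]
    simp [measure_univ]
  -- step: D = 0 a.e.
  have hDae : ∀ᵐ θ ∂Ghat, D θ = 0 := by
    have hnonneg : 0 ≤ᶠ[ae Ghat] (fun θ => -D θ) := by
      filter_upwards [hGhatSupp] with θ hθ
      simp only [Pi.zero_apply]
      linarith [hDle θ hθ]
    have hint0 : ∫ θ, -D θ ∂Ghat = 0 := by
      rw [integral_neg, hDzeroint, neg_zero]
    have := (integral_eq_zero_iff_of_nonneg_ae hnonneg hDint.neg).mp hint0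
    filter_upwards [this] with θ hθ
    simpa using hθ
  -- step: D θ₀ = 0
  have hD0 : D θ₀ = 0 := by
    by_contra hne
    have hopen : IsOpen (D ⁻¹' {(0:ℝ)}ᶜ) := (isOpen_compl_singleton).preimage hDcont
    have hmem : θ₀ ∈ D ⁻¹' {(0:ℝ)}ᶜ := by simpa using hne
    have hU : D ⁻¹' {(0:ℝ)}ᶜ ∈ nhds θ₀ := hopen.mem_nhds hmem
    have := hθ₀supp _ hU
    rw [ae_iff] at hDae
    exact this hDae
  -- step: local max & derivative
  have hmax : IsLocalMax D θ₀ := by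
    have hIoo : Ioo (-c) c ∈ nhds θ₀ := isOpen_Ioo.mem_nhds hθ₀
    filter_upwards [hIoo] with θ hθ
    rw [hD0]
    exact hDle θ (Ioo_subset_Icc_self hθ)
  have hDderiv : HasDerivAt D (∑ i, bb σ (y i) θ₀ * ((y i - θ₀) / σ ^ 2) / a i) θ₀ := by
    rw [hDdef]
    exact (HasDerivAt.fun_sum (fun i _ =>
      (bb_hasDerivAt σ (y i) θ₀ hσ.ne').div_const (a i))).sub_const _
  have hsum : ∑ i, bb σ (y i) θ₀ * ((y i - θ₀) / σ ^ 2) / a i = 0 :=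
    hmax.hasDerivAt_eq_zero hDderiv
  -- final conversion
  have hsqrt : 0 < Real.sqrt (2 * Real.pi) := Real.sqrt_pos.mpr (by positivity)
  have hmix : ∀ i, mixDens σ Ghat (y i) = (σ * Real.sqrt (2 * Real.pi))⁻¹ * a i := by
    intro i
    rw [mixDens, hadef]
    have : ∀ t : ℝ, stdNormalPDF ((y i - t) / σ) =
        (Real.sqrt (2 * Real.pi))⁻¹ * bb σ (y i) t := by
      intro t
      rw [stdNormalPDF, bb]
      rw [neg_div, div_pow, div_div, mul_comm (σ ^ 2) 2, neg_div]
    simp_rw [this]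
    rw [integral_const_mul]
    field_simp
  calc ∑ i, ((y i - θ₀) / mixDens σ Ghat (y i)) * Real.exp (-(y i - θ₀) ^ 2 / (2 * σ ^ 2))
      = ∑ i, (σ ^ 3 * Real.sqrt (2 * Real.pi)) *
          (bb σ (y i) θ₀ * ((y i - θ₀) / σ ^ 2) / a i) := by
        refine Finset.sum_congr rfl (fun i _ => ?_)
        rw [hmix i, bb]
        have hai := (hapos i).ne'
        field_simp
    _ = 0 := by rw [← Finset.mul_sum, hsum, mul_zero]
end

section
/- Bayes lower bound for arbitrary (non-separable) rules under i.i.d. parameters: let θ₁, …, θ_n be i.i.d. with distribution G supported in [-c, c], let Z₁, …, Z_n be i.i.d. standard normal independent of the θᵢ, and Yᵢ = θᵢ + σZᵢ. Then for every measurable Δ : ℝⁿ → ℝⁿ, E[ (1/n) ∑_{i=1}^n (Δᵢ(Y₁, …, Y_n) − θᵢ)² ] ≥ E[ (δ_G(Y₁) − θ₁)² ]; that is, the compound risk of any joint decision rule is at least the Bayes risk of the simple separable rule δ_G. -/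
/-!
Given the other pairs `(θⱼ, Zⱼ)`, `j ≠ i`, which are independent of `(θᵢ, Zᵢ)`, the `i`-th
coordinate of a joint rule is a separable rule `y ↦ Δ(…, y, …)ᵢ` applied to `Yᵢ`, so the risk of
every coordinate is at least the least risk of a separable rule. That least risk is attained by the
posterior mean: by Fubini the risk of `f` is `σ⁻¹ ∫ dy ∫ (f y - t)² φ((y - t)/σ) dG(t)`, and for
each `y` the inner integral is a quadratic in `f y`, minimised at the weighted mean `δ_G(y)`.
-/

open MeasureTheory Set ProbabilityTheory

/-- The posterior mean (Bayes rule) `δ_G(y)`. -/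
noncomputable def postMean (σ : ℝ) (G : MeasureTheory.Measure ℝ) (y : ℝ) : ℝ :=
  (∫ t, t * stdNormalPDF ((y - t) / σ) ∂G) / ∫ t, stdNormalPDF ((y - t) / σ) ∂G

open scoped ENNReal NNReal

section WeightedLeastSquares

variable {μ : Measure ℝ} {w : ℝ → ℝ}

lemma integral_sq_sub_mul_eq (h0 : Integrable w μ) (h1 : Integrable (fun t => t * w t) μ)
    (h2 : Integrable (fun t => t ^ 2 * w t) μ) (a : ℝ) :
    ∫ t, (a - t) ^ 2 * w t ∂μ
      = a ^ 2 * ∫ t, w t ∂μ - 2 * a * ∫ t, t * w t ∂μ + ∫ t, t ^ 2 * w t ∂μ := by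
  have hexpand : (fun t => (a - t) ^ 2 * w t)
      = fun t => (a ^ 2 * w t - 2 * a * (t * w t)) + t ^ 2 * w t := by
    funext t; ring
  have hlin : Integrable (fun t => a ^ 2 * w t - 2 * a * (t * w t)) μ :=
    (h0.const_mul _).sub (h1.const_mul _)
  rw [hexpand, integral_add hlin h2, integral_sub (h0.const_mul _) (h1.const_mul _),
    integral_const_mul, integral_const_mul]

lemma integral_sq_sub_weightedMean_mul_le (h0 : Integrable w μ)
    (h1 : Integrable (fun t => t * w t) μ) (h2 : Integrable (fun t => t ^ 2 * w t) μ)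
    (hpos : 0 < ∫ t, w t ∂μ) (a : ℝ) :
    ∫ t, ((∫ s, s * w s ∂μ) / (∫ s, w s ∂μ) - t) ^ 2 * w t ∂μ ≤ ∫ t, (a - t) ^ 2 * w t ∂μ := by
  rw [integral_sq_sub_mul_eq h0 h1 h2, integral_sq_sub_mul_eq h0 h1 h2]
  set m := (∫ s, s * w s ∂μ) / ∫ s, w s ∂μ
  have hm : ∫ s, s * w s ∂μ = m * ∫ s, w s ∂μ := (div_mul_cancel₀ _ hpos.ne').symm
  rw [hm]
  nlinarith [mul_nonneg hpos.le (sq_nonneg (a - m))]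

end WeightedLeastSquares

@[fun_prop]
lemma continuous_stdNormalPDF : Continuous stdNormalPDF := by
  unfold stdNormalPDF
  fun_prop

lemma stdNormalPDF_pos (z : ℝ) : 0 < stdNormalPDF z := by
  unfold stdNormalPDF
  positivity

lemma stdNormalPDF_le (z : ℝ) : stdNormalPDF z ≤ (Real.sqrt (2 * Real.pi))⁻¹ :=
  mul_le_of_le_one_right (by positivity) (Real.exp_le_one_iff.2 (by nlinarith [sq_nonneg z]))

lemma stdNormalPDF_eq_gaussianPDFReal (z : ℝ) : stdNormalPDF z = gaussianPDFReal 0 1 z := by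
  simp [stdNormalPDF, gaussianPDFReal]

lemma gaussianPDFReal_sq_eq_stdNormalPDF {σ : ℝ} (hσ : 0 < σ) (t y : ℝ) :
    gaussianPDFReal t (.mk (σ ^ 2) (sq_nonneg σ)) y = σ⁻¹ * stdNormalPDF ((y - t) / σ) := by
  rw [stdNormalPDF_eq_gaussianPDFReal, div_eq_inv_mul, gaussianPDFReal_inv_mul hσ.ne',
    abs_of_pos hσ, mul_zero, gaussianPDFReal_sub, zero_add, mul_one, inv_mul_cancel_left₀ hσ.ne']

lemma gaussianReal_map_const_add_mul (σ t : ℝ) :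
    (gaussianReal 0 1).map (fun z => t + σ * z) = gaussianReal t (.mk (σ ^ 2) (sq_nonneg σ)) := by
  have hcomp : (fun z => t + σ * z) = (t + ·) ∘ (σ * ·) := rfl
  rw [hcomp, ← Measure.map_map (by fun_prop) (by fun_prop), gaussianReal_map_const_mul,
    gaussianReal_map_const_add, mul_zero, zero_add, mul_one]

lemma lintegral_gaussianReal_const_add_mul {σ : ℝ} (hσ : 0 < σ) (t : ℝ) {h : ℝ → ℝ≥0∞}
    (hh : Measurable h) :
    ∫⁻ z, h (t + σ * z) ∂gaussianReal 0 1
      = ENNReal.ofReal σ⁻¹ * ∫⁻ y, ENNReal.ofReal (stdNormalPDF ((y - t) / σ)) * h y := by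
  have hvar : (.mk (σ ^ 2) (sq_nonneg σ) : ℝ≥0) ≠ 0 := by
    simpa [← NNReal.coe_ne_zero] using hσ.ne'
  rw [← lintegral_map hh (by fun_prop), gaussianReal_map_const_add_mul,
    gaussianReal_of_var_ne_zero t hvar,
    lintegral_withDensity_eq_lintegral_mul _ (measurable_gaussianPDF _ _) hh,
    ← lintegral_const_mul _ (by fun_prop)]
  refine lintegral_congr fun y => ?_
  rw [Pi.mul_apply, gaussianPDF, gaussianPDFReal_sq_eq_stdNormalPDF hσ,
    ENNReal.ofReal_mul (inv_nonneg.2 hσ.le), mul_assoc]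

section PosteriorMean

variable {σ c : ℝ} {G : Measure ℝ}

lemma integrable_mul_stdNormalPDF [IsFiniteMeasure G] (hG : ∀ᵐ t ∂G, t ∈ Icc (-c) c)
    {g : ℝ → ℝ} (hg : Continuous g) (y : ℝ) :
    Integrable (fun t => g t * stdNormalPDF ((y - t) / σ)) G := by
  obtain ⟨C, hC⟩ := isCompact_Icc.exists_bound_of_continuousOn hg.continuousOn
  refine Integrable.of_bound (C := C * (Real.sqrt (2 * Real.pi))⁻¹) (by fun_prop) ?_
  filter_upwards [hG] with t ht
  rw [norm_mul, Real.norm_of_nonneg (stdNormalPDF_pos _).le]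
  calc ‖g t‖ * stdNormalPDF ((y - t) / σ) ≤ ‖g t‖ * (Real.sqrt (2 * Real.pi))⁻¹ :=
        mul_le_mul_of_nonneg_left (stdNormalPDF_le _) (norm_nonneg _)
    _ ≤ C * (Real.sqrt (2 * Real.pi))⁻¹ := mul_le_mul_of_nonneg_right (hC t ht) (by positivity)

lemma integral_stdNormalPDF_pos [IsProbabilityMeasure G] (hG : ∀ᵐ t ∂G, t ∈ Icc (-c) c)
    (y : ℝ) : 0 < ∫ t, stdNormalPDF ((y - t) / σ) ∂G := by
  have hint : Integrable (fun t => stdNormalPDF ((y - t) / σ)) G := by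
    simpa using integrable_mul_stdNormalPDF (σ := σ) hG continuous_const y (g := fun _ => 1)
  rw [integral_pos_iff_support_of_nonneg (fun t => (stdNormalPDF_pos _).le) hint,
    Function.support_eq_univ fun t => (stdNormalPDF_pos _).ne']
  simp

lemma integral_sq_sub_postMean_mul_le [IsProbabilityMeasure G]
    (hG : ∀ᵐ t ∂G, t ∈ Icc (-c) c) (y a : ℝ) :
    ∫ t, (postMean σ G y - t) ^ 2 * stdNormalPDF ((y - t) / σ) ∂G
      ≤ ∫ t, (a - t) ^ 2 * stdNormalPDF ((y - t) / σ) ∂G := by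
  have hint (k : ℕ) := integrable_mul_stdNormalPDF (σ := σ) hG (continuous_pow k) y
  refine integral_sq_sub_weightedMean_mul_le ?_ ?_ (hint 2) (integral_stdNormalPDF_pos hG y) a
  · simpa only [pow_zero, one_mul] using hint 0
  · simpa only [pow_one] using hint 1

end PosteriorMean

noncomputable def separableRisk (σ : ℝ) (G : Measure ℝ) (f : ℝ → ℝ) : ℝ≥0∞ :=
  ∫⁻ p, ENNReal.ofReal ((f (p.1 + σ * p.2) - p.1) ^ 2) ∂(G.prod (gaussianReal 0 1))

section SeparableRisk

variable {σ c : ℝ} {G : Measure ℝ}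

lemma separableRisk_eq [SFinite G] (hσ : 0 < σ) {f : ℝ → ℝ} (hf : Measurable f) :
    separableRisk σ G f = ENNReal.ofReal σ⁻¹
      * ∫⁻ y, ∫⁻ t, ENNReal.ofReal ((f y - t) ^ 2 * stdNormalPDF ((y - t) / σ)) ∂G := by
  rw [separableRisk, lintegral_prod _ (by fun_prop)]
  simp_rw [fun t => lintegral_gaussianReal_const_add_mul hσ t
    (h := fun y => ENNReal.ofReal ((f y - t) ^ 2)) (by fun_prop)]
  rw [lintegral_const_mul _ (by fun_prop), lintegral_lintegral_swap (by fun_prop)]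
  congr 1
  refine lintegral_congr fun y => lintegral_congr fun t => ?_
  rw [← ENNReal.ofReal_mul (stdNormalPDF_pos _).le, mul_comm]

@[fun_prop]
lemma measurable_postMean [SFinite G] : Measurable (postMean σ G) := by
  have hker : StronglyMeasurable fun q : ℝ × ℝ => stdNormalPDF ((q.1 - q.2) / σ) :=
    (by fun_prop : Measurable _).stronglyMeasurable
  have hnum : StronglyMeasurable fun q : ℝ × ℝ => q.2 * stdNormalPDF ((q.1 - q.2) / σ) :=
    (by fun_prop : Measurable _).stronglyMeasurable
  exact hnum.integral_prod_right'.measurable.div hker.integral_prod_right'.measurable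

lemma separableRisk_postMean_le [IsProbabilityMeasure G] (hσ : 0 < σ)
    (hG : ∀ᵐ t ∂G, t ∈ Icc (-c) c) {f : ℝ → ℝ} (hf : Measurable f) :
    separableRisk σ G (postMean σ G) ≤ separableRisk σ G f := by
  rw [separableRisk_eq hσ hf, separableRisk_eq hσ measurable_postMean]
  refine mul_le_mul_right (lintegral_mono fun y => ?_) _
  have hlin (a : ℝ) : ∫⁻ t, ENNReal.ofReal ((a - t) ^ 2 * stdNormalPDF ((y - t) / σ)) ∂G
      = ENNReal.ofReal (∫ t, (a - t) ^ 2 * stdNormalPDF ((y - t) / σ) ∂G) := by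
    refine (ofReal_integral_eq_lintegral_ofReal ?_ ?_).symm
    · exact integrable_mul_stdNormalPDF hG (by fun_prop) y
    · exact ae_of_all _ fun t => mul_nonneg (sq_nonneg _) (stdNormalPDF_pos _).le
  rw [hlin, hlin]
  exact ENNReal.ofReal_le_ofReal (integral_sq_sub_postMean_mul_le hG y (f y))

end SeparableRisk

lemma lintegral_pi_eq_lintegral_lintegral_insertNth {m : ℕ} {α : Fin (m + 1) → Type*}
    [∀ i, MeasurableSpace (α i)] (μ : ∀ i, Measure (α i)) [∀ i, SigmaFinite (μ i)]
    (i : Fin (m + 1)) {F : (∀ j, α j) → ℝ≥0∞} (hF : Measurable F) :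
    ∫⁻ v, F v ∂Measure.pi μ
      = ∫⁻ w, ∫⁻ x, F (i.insertNth x w) ∂μ i ∂Measure.pi fun j => μ (i.succAbove j) := by
  rw [← ((measurePreserving_piFinSuccAbove μ i).symm _).lintegral_comp hF,
    lintegral_prod_symm (fun p => F ((MeasurableEquiv.piFinSuccAbove α i).symm p))
      (hF.comp (MeasurableEquiv.measurable _)).aemeasurable]
  rfl

lemma Fin.comp_insertNth {m : ℕ} {α β : Type*} (g : α → β) (i : Fin (m + 1)) (x : α)
    (w : Fin m → α) : g ∘ i.insertNth x w = i.insertNth (g x) (g ∘ w) := by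
  funext j
  cases j using Fin.succAboveCases i <;> simp

lemma separableRisk_postMean_le_lintegral_pi {σ c : ℝ} {G : Measure ℝ} [IsProbabilityMeasure G]
    (hσ : 0 < σ) (hG : ∀ᵐ t ∂G, t ∈ Icc (-c) c) {n : ℕ} {Δ : (Fin n → ℝ) → Fin n → ℝ}
    (hΔ : Measurable Δ) (i : Fin n) :
    separableRisk σ G (postMean σ G)
      ≤ ∫⁻ v, ENNReal.ofReal ((Δ (fun j => (v j).1 + σ * (v j).2) i - (v i).1) ^ 2)
          ∂Measure.pi fun _ => G.prod (gaussianReal 0 1) := by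
  obtain ⟨m, rfl⟩ : ∃ m, n = m + 1 := ⟨n - 1, by have := i.pos; omega⟩
  set obs : ℝ × ℝ → ℝ := fun p => p.1 + σ * p.2
  rw [lintegral_pi_eq_lintegral_lintegral_insertNth _ i (by fun_prop)]
  calc separableRisk σ G (postMean σ G)
      = ∫⁻ _, separableRisk σ G (postMean σ G)
          ∂Measure.pi fun _ : Fin m => G.prod (gaussianReal 0 1) := by simp
    _ ≤ _ := lintegral_mono fun w => ?_
  refine (separableRisk_postMean_le hσ hG (f := fun y => Δ (i.insertNth y (obs ∘ w)) i)
    (by fun_prop)).trans_eq ?_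
  refine lintegral_congr fun x => ?_
  rw [Fin.insertNth_apply_same]
  exact congrArg (fun v => ENNReal.ofReal ((Δ v i - x.1) ^ 2)) (Fin.comp_insertNth obs i x w).symm

lemma le_lintegral_ofReal_mean {Ω ι : Type*} [MeasurableSpace Ω] [Fintype ι] [Nonempty ι]
    {μ : Measure Ω} {f : ι → Ω → ℝ} (hf : ∀ i, Measurable (f i)) (hf0 : ∀ i ω, 0 ≤ f i ω)
    {r : ℝ≥0∞} (hr : ∀ i, r ≤ ∫⁻ ω, ENNReal.ofReal (f i ω) ∂μ) :
    r ≤ ∫⁻ ω, ENNReal.ofReal ((1 / Fintype.card ι : ℝ) * ∑ i, f i ω) ∂μ := by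
  have hcard : ENNReal.ofReal (1 / Fintype.card ι : ℝ) * Fintype.card ι = 1 := by
    rw [one_div, ENNReal.ofReal_inv_of_pos (by simp [Fintype.card_pos]), ENNReal.ofReal_natCast,
      ENNReal.inv_mul_cancel (by simp) (by simp)]
  simp_rw [ENNReal.ofReal_mul (by positivity : (0 : ℝ) ≤ 1 / Fintype.card ι),
    ENNReal.ofReal_sum_of_nonneg fun i _ => hf0 i _]
  rw [lintegral_const_mul _ (Finset.measurable_sum _ fun i _ => (hf i).ennreal_ofReal),
    lintegral_finsetSum _ fun i _ => (hf i).ennreal_ofReal]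
  calc r = ENNReal.ofReal (1 / Fintype.card ι : ℝ) * ∑ _i : ι, r := by
        rw [Finset.sum_const, Finset.card_univ, nsmul_eq_mul, ← mul_assoc, hcard, one_mul]
    _ ≤ _ := by gcongr with i; exact hr i

theorem bayes_lower_bound_joint_rules_general (σ c : ℝ) (hσ : 0 < σ)
    (n : ℕ) (hn : 0 < n)
    (G : Measure ℝ) [IsProbabilityMeasure G] (hG : ∀ᵐ t ∂G, t ∈ Icc (-c) c)
    {Ω : Type*} [MeasurableSpace Ω] (P : Measure Ω) [IsProbabilityMeasure P]
    (θ Z : Fin n → Ω → ℝ)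
    (hmeas : ∀ i, Measurable fun ω => (θ i ω, Z i ω))
    (hindep : iIndepFun (fun i ω => (θ i ω, Z i ω)) P)
    (hlaw : ∀ i, P.map (fun ω => (θ i ω, Z i ω)) = G.prod (gaussianReal 0 1))
    (Y : Fin n → Ω → ℝ) (hY : ∀ i ω, Y i ω = θ i ω + σ * Z i ω)
    (Δ : (Fin n → ℝ) → Fin n → ℝ) (hΔ : Measurable Δ) :
    ∫⁻ ω, ENNReal.ofReal ((1 / n : ℝ) * ∑ i, (Δ (fun j => Y j ω) i - θ i ω) ^ 2) ∂P
      ≥ ∫⁻ ω, ENNReal.ofReal ((postMean σ G (Y ⟨0, hn⟩ ω) - θ ⟨0, hn⟩ ω) ^ 2) ∂P := by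
  obtain rfl : Y = fun i ω => θ i ω + σ * Z i ω := funext₂ hY
  have hθ (i : Fin n) : Measurable (θ i) := (hmeas i).fst
  have hZ (i : Fin n) : Measurable (Z i) := (hmeas i).snd
  have hjoint :
      P.map (fun ω i => (θ i ω, Z i ω)) = Measure.pi fun _ => G.prod (gaussianReal 0 1) := by
    rw [hindep.map_fun_eq_pi_map fun i => (hmeas i).aemeasurable]
    simp_rw [hlaw]
  have hbayes : ∫⁻ ω, ENNReal.ofReal ((postMean σ G (θ ⟨0, hn⟩ ω + σ * Z ⟨0, hn⟩ ω)
      - θ ⟨0, hn⟩ ω) ^ 2) ∂P = separableRisk σ G (postMean σ G) := by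
    rw [separableRisk, ← hlaw ⟨0, hn⟩, lintegral_map (by fun_prop) (hmeas _)]
  have hcoord (i : Fin n) : separableRisk σ G (postMean σ G)
      ≤ ∫⁻ ω, ENNReal.ofReal ((Δ (fun j => θ j ω + σ * Z j ω) i - θ i ω) ^ 2) ∂P := by
    have := separableRisk_postMean_le_lintegral_pi hσ hG hΔ i
    rwa [← hjoint, lintegral_map (by fun_prop) (measurable_pi_lambda _ hmeas)] at this
  have : Nonempty (Fin n) := ⟨⟨0, hn⟩⟩
  rw [ge_iff_le, hbayes]
  simpa only [Fintype.card_fin] using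
    le_lintegral_ofReal_mean (μ := P) (fun i => by fun_prop) (fun i ω => sq_nonneg _) hcoord

/-- **Bayes lower bound for arbitrary (non-separable) rules under i.i.d. parameters**:
with `θ₁, …, θₙ` i.i.d. `G`, `Z₁, …, Zₙ` i.i.d. standard normal independent of the `θᵢ`,
and `Yᵢ = θᵢ + σZᵢ`, every measurable joint rule `Δ : ℝⁿ → ℝⁿ` satisfies
`E[(1/n) ∑ (Δᵢ(Y) − θᵢ)²] ≥ E[(δ_G(Y₁) − θ₁)²]`. -/
theorem bayes_lower_bound_joint_rules (σ c : ℝ) (hσ : 0 < σ) (hc : 0 < c)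
    (n : ℕ) (hn : 0 < n)
    (G : Measure ℝ) [IsProbabilityMeasure G] (hG : ∀ᵐ t ∂G, t ∈ Icc (-c) c)
    {Ω : Type*} [MeasurableSpace Ω] (P : Measure Ω) [IsProbabilityMeasure P]
    (θ Z : Fin n → Ω → ℝ)
    (hmeas : ∀ i, Measurable fun ω => (θ i ω, Z i ω))
    (hindep : iIndepFun (fun i ω => (θ i ω, Z i ω)) P)
    (hlaw : ∀ i, P.map (fun ω => (θ i ω, Z i ω)) = G.prod (gaussianReal 0 1))
    (Y : Fin n → Ω → ℝ) (hY : ∀ i ω, Y i ω = θ i ω + σ * Z i ω)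
    (Δ : (Fin n → ℝ) → Fin n → ℝ) (hΔ : Measurable Δ) :
    ∫⁻ ω, ENNReal.ofReal ((1 / n : ℝ) * ∑ i, (Δ (fun j => Y j ω) i - θ i ω) ^ 2) ∂P
      ≥ ∫⁻ ω, ENNReal.ofReal ((postMean σ G (Y ⟨0, hn⟩ ω) - θ ⟨0, hn⟩ ω) ^ 2) ∂P :=
  bayes_lower_bound_joint_rules_general σ c hσ n hn G hG P θ Z hmeas hindep hlaw Y hY Δ hΔ
end

section
/- Nature's maxmin bound in the compound decision game: let 𝒢 be the class of joint distributions P of (θ₁, …, θ_n) with values in [−c, c]ⁿ whose mean empirical distribution E_P[(1/n) ∑_{i=1}^n δ_{θᵢ}] equals G, and given (θ₁, …, θ_n) let Yᵢ = θᵢ + σZᵢ with Z₁, …, Z_n i.i.d. standard normal independent of (θ₁, …, θ_n). Then for every measurable decision rule Δ : ℝⁿ → ℝⁿ, sup_{P ∈ 𝒢} E_P[ (1/n) ∑_{i=1}^n (Δᵢ(Y₁, …, Y_n) − θᵢ)² ] ≥ E_{iid G}[ (δ_G(Y₁) − θ₁)² ], the Bayes risk under i.i.d. sampling from G; the supremum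 over Nature's strategies in 𝒢 is at least the i.i.d.-G Bayes risk because the i.i.d.-G distribution belongs to 𝒢. -/
open MeasureTheory Set ProbabilityTheory
open scoped ENNReal NNReal

namespace NatureMaxmin

noncomputable def vsig (σ : ℝ) : NNReal := ⟨σ ^ 2, sq_nonneg σ⟩

lemma coe_vsig (σ : ℝ) : (vsig σ : ℝ) = σ ^ 2 := rfl

lemma vsig_ne_zero {σ : ℝ} (hσ : 0 < σ) : vsig σ ≠ 0 := by
  intro h
  have : (vsig σ : ℝ) = 0 := by rw [h]; simp
  simp only [coe_vsig] at this
  nlinarith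

lemma continuous_stdNormalPDF : Continuous stdNormalPDF := by
  unfold stdNormalPDF; fun_prop

lemma stdNormalPDF_pos (z : ℝ) : 0 < stdNormalPDF z := by
  unfold stdNormalPDF
  have : 0 < Real.sqrt (2 * Real.pi) := Real.sqrt_pos.2 (by positivity)
  positivity

lemma stdNormalPDF_le (z : ℝ) : stdNormalPDF z ≤ (Real.sqrt (2 * Real.pi))⁻¹ := by
  unfold stdNormalPDF
  have h1 : Real.exp (-z ^ 2 / 2) ≤ 1 := Real.exp_le_one_iff.2 (by nlinarith [sq_nonneg z])
  have h2 : (0:ℝ) ≤ (Real.sqrt (2 * Real.pi))⁻¹ := by positivity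
  nlinarith

lemma gaussianPDFReal_eq {σ : ℝ} (hσ : 0 < σ) (t y : ℝ) :
    gaussianPDFReal t (vsig σ) y = σ⁻¹ * stdNormalPDF ((y - t) / σ) := by
  simp only [gaussianPDFReal, coe_vsig, stdNormalPDF]
  have h1 : Real.sqrt (2 * Real.pi * σ ^ 2) = Real.sqrt (2 * Real.pi) * σ := by
    rw [Real.sqrt_mul (by positivity), Real.sqrt_sq hσ.le]
  have h2 : -(y - t) ^ 2 / (2 * σ ^ 2) = -((y - t) / σ) ^ 2 / 2 := by
    field_simp
  rw [h1, h2, mul_inv]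
  ring

lemma measurable_postMean (σ : ℝ) (G : Measure ℝ) [SFinite G] : Measurable (postMean σ G) := by
  have h1 : StronglyMeasurable fun p : ℝ × ℝ => p.2 * stdNormalPDF ((p.1 - p.2) / σ) := by
    refine Continuous.stronglyMeasurable ?_
    exact continuous_snd.mul (continuous_stdNormalPDF.comp (by fun_prop))
  have h2 : StronglyMeasurable fun p : ℝ × ℝ => stdNormalPDF ((p.1 - p.2) / σ) := by
    refine Continuous.stronglyMeasurable ?_
    exact continuous_stdNormalPDF.comp (by fun_prop)
  exact (h1.integral_prod_right'.measurable).div (h2.integral_prod_right'.measurable)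

lemma map_gauss {σ : ℝ} (hσ : 0 < σ) (t : ℝ) :
    (gaussianReal 0 1).map (fun z => t + σ * z) = gaussianReal t (vsig σ) := by
  have h : (fun z : ℝ => t + σ * z) = (fun y => t + y) ∘ (fun z => σ * z) := rfl
  rw [h, ← Measure.map_map (by fun_prop) (by fun_prop), gaussianReal_map_const_mul,
    gaussianReal_map_const_add]
  norm_num
  congr 1

lemma lintegral_gauss_shift {σ : ℝ} (hσ : 0 < σ) (t : ℝ) {F : ℝ → ENNReal} (hF : Measurable F) :
    ∫⁻ z, F (t + σ * z) ∂(gaussianReal 0 1)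
      = ∫⁻ y, F y * ENNReal.ofReal (gaussianPDFReal t (vsig σ) y) ∂(volume : Measure ℝ) := by
  rw [← lintegral_map hF (by fun_prop : Measurable fun z : ℝ => t + σ * z), map_gauss hσ t,
    gaussianReal_of_var_ne_zero _ (vsig_ne_zero hσ),
    lintegral_withDensity_eq_lintegral_mul _ (measurable_gaussianPDF _ _) hF]
  refine lintegral_congr fun y => ?_
  simp [gaussianPDF, mul_comm]


lemma key_bound {σ c : ℝ} (hσ : 0 < σ) (hc : 0 < c) (G : Measure ℝ) [IsProbabilityMeasure G]
    (hG : ∀ᵐ t ∂G, t ∈ Icc (-c) c) (y a : ℝ) :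
    ∫⁻ t, ENNReal.ofReal ((postMean σ G y - t) ^ 2 * gaussianPDFReal t (vsig σ) y) ∂G
      ≤ ∫⁻ t, ENNReal.ofReal ((a - t) ^ 2 * gaussianPDFReal t (vsig σ) y) ∂G := by
  set w : ℝ → ℝ := fun t => gaussianPDFReal t (vsig σ) y with hw
  have hwc : Continuous w := by
    have : w = fun t => σ⁻¹ * stdNormalPDF ((y - t) / σ) := by
      funext t; exact gaussianPDFReal_eq hσ t y
    rw [this]
    exact continuous_const.mul (continuous_stdNormalPDF.comp (by fun_prop))
  set M : ℝ := σ⁻¹ * (Real.sqrt (2 * Real.pi))⁻¹ with hM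
  have hwpos : ∀ t, 0 < w t := fun t => by
    simp only [hw]; rw [gaussianPDFReal_eq hσ t y]
    exact mul_pos (by positivity) (stdNormalPDF_pos _)
  have hwle : ∀ t, w t ≤ M := fun t => by
    simp only [hw, hM]; rw [gaussianPDFReal_eq hσ t y]
    exact mul_le_mul_of_nonneg_left (stdNormalPDF_le _) (by positivity)
  -- integrability
  have hbound : ∀ (k : ℕ), Integrable (fun t => t ^ k * w t) G := by
    intro k
    refine Integrable.mono' (integrable_const (c ^ k * M)) ?_ ?_
    · exact ((measurable_id.pow_const k).mul hwc.measurable).aestronglyMeasurable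
    · filter_upwards [hG] with t ht
      have h1 : |t| ≤ c := abs_le.2 ⟨ht.1, ht.2⟩
      have h2 : |t ^ k * w t| = |t| ^ k * w t := by
        rw [abs_mul, abs_pow, abs_of_pos (hwpos t)]
      rw [Real.norm_eq_abs, h2]
      have : |t| ^ k ≤ c ^ k := pow_le_pow_left₀ (abs_nonneg t) h1 k
      nlinarith [hwpos t, hwle t, pow_nonneg (abs_nonneg t) k, pow_nonneg hc.le k]
  have hw_i : Integrable w G := by
    have := hbound 0; simpa using this
  have h1_i : Integrable (fun t => t * w t) G := by
    have := hbound 1; simpa using this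
  have h2_i : Integrable (fun t => t ^ 2 * w t) G := hbound 2
  set I0 : ℝ := ∫ t, w t ∂G with hI0d
  set I1 : ℝ := ∫ t, t * w t ∂G with hI1d
  set I2 : ℝ := ∫ t, t ^ 2 * w t ∂G with hI2d
  have hI0 : 0 < I0 := by
    rw [hI0d, integral_pos_iff_support_of_nonneg_ae (ae_of_all _ fun t => (hwpos t).le) hw_i]
    have : Function.support w = univ := by
      ext t; simp [Function.mem_support, (hwpos t).ne']
    rw [this]
    simp
  have hδ : postMean σ G y = I1 / I0 := by
    have hnum : ∫ t, t * stdNormalPDF ((y - t) / σ) ∂G = σ * I1 := by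
      rw [hI1d, ← integral_const_mul]
      refine integral_congr_ae (ae_of_all _ fun t => ?_)
      simp only [hw]
      rw [gaussianPDFReal_eq hσ t y]
      field_simp
    have hden : ∫ t, stdNormalPDF ((y - t) / σ) ∂G = σ * I0 := by
      rw [hI0d, ← integral_const_mul]
      refine integral_congr_ae (ae_of_all _ fun t => ?_)
      simp only [hw]
      rw [gaussianPDFReal_eq hσ t y]
      field_simp
    rw [postMean, hnum, hden, mul_div_mul_left _ _ hσ.ne']
  have expand : ∀ r : ℝ, ∫ t, (r - t) ^ 2 * w t ∂G = r ^ 2 * I0 - 2 * r * I1 + I2 := by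
    intro r
    have hfe : (fun t => (r - t) ^ 2 * w t)
        = fun t => (r ^ 2 * w t - 2 * r * (t * w t)) + t ^ 2 * w t := by
      funext t; ring
    have hsub : Integrable (fun t => r ^ 2 * w t - 2 * r * (t * w t)) G :=
      (hw_i.const_mul _).sub (h1_i.const_mul _)
    rw [hfe, integral_add hsub h2_i,
      integral_sub (hw_i.const_mul _) (h1_i.const_mul _), integral_const_mul,
      integral_const_mul]
  have hint : ∀ r : ℝ, Integrable (fun t => (r - t) ^ 2 * w t) G := by
    intro r
    have hfe : (fun t => (r - t) ^ 2 * w t)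
        = fun t => (r ^ 2 * w t - 2 * r * (t * w t)) + t ^ 2 * w t := by
      funext t; ring
    rw [hfe]
    exact ((hw_i.const_mul _).sub (h1_i.const_mul _)).add h2_i
  have hnn : ∀ r : ℝ, 0 ≤ᵐ[G] fun t => (r - t) ^ 2 * w t :=
    fun r => ae_of_all _ fun t => mul_nonneg (sq_nonneg _) (hwpos t).le
  rw [← ofReal_integral_eq_lintegral_ofReal (hint _) (hnn _),
    ← ofReal_integral_eq_lintegral_ofReal (hint _) (hnn _)]
  refine ENNReal.ofReal_le_ofReal ?_
  rw [expand, expand]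
  set p : ℝ := postMean σ G y with hpd
  have hpI : I1 = p * I0 := by rw [hδ]; exact (div_mul_cancel₀ _ hI0.ne').symm
  have key : a ^ 2 * I0 - 2 * a * I1 + I2 - (p ^ 2 * I0 - 2 * p * I1 + I2)
      = I0 * (a - p) ^ 2 := by rw [hpI]; ring
  linarith [mul_nonneg hI0.le (sq_nonneg (a - p)), key]


def ins {m : ℕ} (i : Fin (m + 1)) (t : ℝ) (w : Fin m → ℝ) : Fin (m + 1) → ℝ :=
  i.insertNth t w

@[simp] lemma ins_same {m : ℕ} (i : Fin (m + 1)) (t : ℝ) (w : Fin m → ℝ) :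
    ins i t w i = t := Fin.insertNth_apply_same (α := fun _ => ℝ) i t w

@[simp] lemma ins_succAbove {m : ℕ} (i : Fin (m + 1)) (t : ℝ) (w : Fin m → ℝ) (k : Fin m) :
    ins i t w (i.succAbove k) = w k := Fin.insertNth_apply_succAbove (α := fun _ => ℝ) i t w k

lemma coord_bound {σ c : ℝ} (hσ : 0 < σ) (hc : 0 < c) {m : ℕ}
    (G : Measure ℝ) [IsProbabilityMeasure G] (hG : ∀ᵐ t ∂G, t ∈ Icc (-c) c)
    (i : Fin (m + 1)) (Δ : (Fin (m + 1) → ℝ) → Fin (m + 1) → ℝ) (hΔ : Measurable Δ) :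
    (∫⁻ t, ∫⁻ z, ENNReal.ofReal ((postMean σ G (t + σ * z) - t) ^ 2) ∂(gaussianReal 0 1) ∂G)
      ≤ ∫⁻ θv, ∫⁻ zv, ENNReal.ofReal ((Δ (fun j => θv j + σ * zv j) i - θv i) ^ 2)
          ∂(Measure.pi fun _ : Fin (m + 1) => gaussianReal 0 1)
          ∂(Measure.pi fun _ : Fin (m + 1) => G) := by
  have hδm : Measurable (postMean σ G) := measurable_postMean σ G
  have hins : Measurable fun p : ℝ × (Fin m → ℝ) => ins i p.1 p.2 := by
    refine measurable_pi_iff.2 fun j => ?_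
    refine @Fin.succAboveCases m
      (fun j => Measurable fun p : ℝ × (Fin m → ℝ) => ins i p.1 p.2 j) i ?_ ?_ j
    · simpa using measurable_fst
    · intro k
      simpa [Function.comp_def] using (measurable_pi_apply k).comp measurable_snd
  have hpdfm : Measurable fun q : ℝ × ℝ => gaussianPDFReal q.1 (vsig σ) q.2 := by
    refine Continuous.measurable ?_
    unfold gaussianPDFReal
    fun_prop
  have harg : ∀ (t : ℝ) (θ' : Fin m → ℝ) (z : ℝ) (z' : Fin m → ℝ),
      (fun j => ins i t θ' j + σ * ins i z z' j) = ins i (t + σ * z) fun k => θ' k + σ * z' k := by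
    intro t θ' z z'
    funext j
    refine @Fin.succAboveCases m
      (fun j => ins i t θ' j + σ * ins i z z' j
        = ins i (t + σ * z) (fun k => θ' k + σ * z' k) j) i ?_ ?_ j
    · simp
    · intro k; simp
  have hesymm : ∀ p : ℝ × (Fin m → ℝ),
      (MeasurableEquiv.piFinSuccAbove (fun _ : Fin (m + 1) => ℝ) i).symm p
        = ins i p.1 p.2 := fun p => rfl
  -- master measurability
  have hΨ : Measurable fun q : ℝ × ((Fin m → ℝ) × ((Fin m → ℝ) × ℝ)) =>
      ENNReal.ofReal ((Δ (ins i q.2.2.2 fun k => q.2.1 k + σ * q.2.2.1 k) i - q.1) ^ 2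
        * gaussianPDFReal q.1 (vsig σ) q.2.2.2) := by
    fun_prop
  have hjointκ : Measurable fun p : ℝ × ℝ =>
      ENNReal.ofReal ((postMean σ G p.1 - p.2) ^ 2 * gaussianPDFReal p.2 (vsig σ) p.1) := by
    fun_prop
  have hκ : Measurable fun y : ℝ =>
      ∫⁻ t, ENNReal.ofReal ((postMean σ G y - t) ^ 2 * gaussianPDFReal t (vsig σ) y) ∂G :=
    hjointκ.lintegral_prod_right'
  have hjoint : Measurable fun p : (Fin (m + 1) → ℝ) × (Fin (m + 1) → ℝ) =>
      ENNReal.ofReal ((Δ (fun j => p.1 j + σ * p.2 j) i - p.1 i) ^ 2) := by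
    fun_prop
  have hg : Measurable fun θv : Fin (m + 1) → ℝ =>
      ∫⁻ zv, ENNReal.ofReal ((Δ (fun j => θv j + σ * zv j) i - θv i) ^ 2)
        ∂(Measure.pi fun _ : Fin (m + 1) => gaussianReal 0 1) :=
    hjoint.lintegral_prod_right'
  have hsymmG := (measurePreserving_piFinSuccAbove (fun _ : Fin (m + 1) => (G : Measure ℝ)) i).symm
      (MeasurableEquiv.piFinSuccAbove (fun _ : Fin (m + 1) => ℝ) i)
  have hsymmZ := (measurePreserving_piFinSuccAbove
      (fun _ : Fin (m + 1) => (gaussianReal 0 1 : Measure ℝ)) i).symm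
      (MeasurableEquiv.piFinSuccAbove (fun _ : Fin (m + 1) => ℝ) i)
  -- abbreviations (all spelled out; defeq does the work)
  have key_swapC : AEMeasurable
      (Function.uncurry fun t y => ENNReal.ofReal
        ((postMean σ G y - t) ^ 2 * gaussianPDFReal t (vsig σ) y))
      ((G : Measure ℝ).prod (volume : Measure ℝ)) :=
    ((hjointκ.comp (measurable_snd.prodMk measurable_fst)) :).aemeasurable
  calc ∫⁻ t, ∫⁻ z, ENNReal.ofReal ((postMean σ G (t + σ * z) - t) ^ 2) ∂gaussianReal 0 1 ∂G
      = ∫⁻ t, ∫⁻ y, ENNReal.ofReal ((postMean σ G y - t) ^ 2 * gaussianPDFReal t (vsig σ) y)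
          ∂(volume : Measure ℝ) ∂G := by
        refine lintegral_congr fun t => ?_
        rw [lintegral_gauss_shift hσ t
          (F := fun y => ENNReal.ofReal ((postMean σ G y - t) ^ 2)) (by fun_prop)]
        refine lintegral_congr fun y => ?_
        rw [← ENNReal.ofReal_mul (sq_nonneg _)]
    _ = ∫⁻ y, ∫⁻ t, ENNReal.ofReal ((postMean σ G y - t) ^ 2 * gaussianPDFReal t (vsig σ) y)
          ∂G ∂(volume : Measure ℝ) := lintegral_lintegral_swap key_swapC
    _ = ∫⁻ z', (∫⁻ y, ∫⁻ t, ENNReal.ofReal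
          ((postMean σ G y - t) ^ 2 * gaussianPDFReal t (vsig σ) y) ∂G ∂(volume : Measure ℝ))
          ∂(Measure.pi fun _ : Fin m => (gaussianReal 0 1 : Measure ℝ)) := by
        rw [lintegral_const, measure_univ, mul_one]
    _ = ∫⁻ θ', (∫⁻ z', (∫⁻ y, ∫⁻ t, ENNReal.ofReal
          ((postMean σ G y - t) ^ 2 * gaussianPDFReal t (vsig σ) y) ∂G ∂(volume : Measure ℝ))
          ∂(Measure.pi fun _ : Fin m => (gaussianReal 0 1 : Measure ℝ)))
          ∂(Measure.pi fun _ : Fin m => G) := by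
        rw [lintegral_const (μ := Measure.pi fun _ : Fin m => G), measure_univ, mul_one]
    _ = ∫⁻ θ', ∫⁻ q, (∫⁻ t, ENNReal.ofReal
          ((postMean σ G q.2 - t) ^ 2 * gaussianPDFReal t (vsig σ) q.2) ∂G)
          ∂((Measure.pi fun _ : Fin m => (gaussianReal 0 1 : Measure ℝ)).prod
            (volume : Measure ℝ)) ∂(Measure.pi fun _ : Fin m => G) := by
        refine lintegral_congr fun θ' => ?_
        exact lintegral_lintegral ((hκ.comp measurable_snd) :).aemeasurable
    _ = ∫⁻ u, (∫⁻ t, ENNReal.ofReal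
          ((postMean σ G u.2.2 - t) ^ 2 * gaussianPDFReal t (vsig σ) u.2.2) ∂G)
          ∂((Measure.pi fun _ : Fin m => G).prod
            ((Measure.pi fun _ : Fin m => (gaussianReal 0 1 : Measure ℝ)).prod
              (volume : Measure ℝ))) :=
        lintegral_lintegral ((hκ.comp (measurable_snd.comp measurable_snd)) :).aemeasurable
    _ ≤ ∫⁻ u, (∫⁻ t, ENNReal.ofReal
          ((Δ (ins i u.2.2 fun k => u.1 k + σ * u.2.1 k) i - t) ^ 2
            * gaussianPDFReal t (vsig σ) u.2.2) ∂G)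
          ∂((Measure.pi fun _ : Fin m => G).prod
            ((Measure.pi fun _ : Fin m => (gaussianReal 0 1 : Measure ℝ)).prod
              (volume : Measure ℝ))) :=
        lintegral_mono fun u => key_bound hσ hc G hG u.2.2 _
    _ = ∫⁻ t, ∫⁻ u, ENNReal.ofReal
          ((Δ (ins i u.2.2 fun k => u.1 k + σ * u.2.1 k) i - t) ^ 2
            * gaussianPDFReal t (vsig σ) u.2.2)
          ∂((Measure.pi fun _ : Fin m => G).prod
            ((Measure.pi fun _ : Fin m => (gaussianReal 0 1 : Measure ℝ)).prod
              (volume : Measure ℝ))) ∂G :=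
        by
          haveI : SigmaFinite ((Measure.pi fun _ : Fin m => (gaussianReal 0 1 : Measure ℝ)).prod
              (volume : Measure ℝ)) := inferInstance
          haveI : SigmaFinite ((Measure.pi fun _ : Fin m => G).prod
              ((Measure.pi fun _ : Fin m => (gaussianReal 0 1 : Measure ℝ)).prod
                (volume : Measure ℝ))) := inferInstance
          exact (lintegral_lintegral_swap hΨ.aemeasurable).symm
    _ = ∫⁻ t, ∫⁻ θ', ∫⁻ q, ENNReal.ofReal
          ((Δ (ins i q.2 fun k => θ' k + σ * q.1 k) i - t) ^ 2
            * gaussianPDFReal t (vsig σ) q.2)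
          ∂((Measure.pi fun _ : Fin m => (gaussianReal 0 1 : Measure ℝ)).prod
            (volume : Measure ℝ)) ∂(Measure.pi fun _ : Fin m => G) ∂G := by
        refine lintegral_congr fun t => ?_
        exact (lintegral_lintegral
          (f := fun (θ' : Fin m → ℝ) (q : (Fin m → ℝ) × ℝ) => ENNReal.ofReal
            ((Δ (ins i q.2 fun k => θ' k + σ * q.1 k) i - t) ^ 2
              * gaussianPDFReal t (vsig σ) q.2))
          ((hΨ.comp (measurable_const.prodMk measurable_id)) :).aemeasurable).symm
    _ = ∫⁻ t, ∫⁻ θ', ∫⁻ z', ∫⁻ y, ENNReal.ofReal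
          ((Δ (ins i y fun k => θ' k + σ * z' k) i - t) ^ 2
            * gaussianPDFReal t (vsig σ) y) ∂(volume : Measure ℝ)
          ∂(Measure.pi fun _ : Fin m => (gaussianReal 0 1 : Measure ℝ))
          ∂(Measure.pi fun _ : Fin m => G) ∂G := by
        refine lintegral_congr fun t => lintegral_congr fun θ' => ?_
        exact (lintegral_lintegral
          (f := fun (z' : Fin m → ℝ) (y : ℝ) => ENNReal.ofReal
            ((Δ (ins i y fun k => θ' k + σ * z' k) i - t) ^ 2
              * gaussianPDFReal t (vsig σ) y))
          ((hΨ.comp (measurable_const.prodMk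
            (measurable_const.prodMk measurable_id))) :).aemeasurable).symm
    _ = ∫⁻ t, ∫⁻ θ', ∫⁻ z', ∫⁻ z, ENNReal.ofReal
          ((Δ (ins i (t + σ * z) fun k => θ' k + σ * z' k) i - t) ^ 2) ∂(gaussianReal 0 1)
          ∂(Measure.pi fun _ : Fin m => (gaussianReal 0 1 : Measure ℝ))
          ∂(Measure.pi fun _ : Fin m => G) ∂G := by
        refine lintegral_congr fun t => lintegral_congr fun θ' => lintegral_congr fun z' => ?_
        rw [lintegral_gauss_shift hσ t
          (F := fun y => ENNReal.ofReal ((Δ (ins i y fun k => θ' k + σ * z' k) i - t) ^ 2))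
          (by fun_prop)]
        refine lintegral_congr fun y => ?_
        rw [← ENNReal.ofReal_mul (sq_nonneg _)]
    _ = ∫⁻ t, ∫⁻ θ', ∫⁻ z, ∫⁻ z', ENNReal.ofReal
          ((Δ (ins i (t + σ * z) fun k => θ' k + σ * z' k) i - t) ^ 2)
          ∂(Measure.pi fun _ : Fin m => (gaussianReal 0 1 : Measure ℝ)) ∂(gaussianReal 0 1)
          ∂(Measure.pi fun _ : Fin m => G) ∂G := by
        refine lintegral_congr fun t => lintegral_congr fun θ' => ?_
        refine (lintegral_lintegral_swap ?_).symm
        have : Measurable fun q : ℝ × (Fin m → ℝ) => ENNReal.ofReal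
            ((Δ (ins i (t + σ * q.1) fun k => θ' k + σ * q.2 k) i - t) ^ 2) := by fun_prop
        exact this.aemeasurable
    _ = ∫⁻ t, ∫⁻ θ', ∫⁻ zv, ENNReal.ofReal
          ((Δ (fun j => ins i t θ' j + σ * zv j) i - t) ^ 2)
          ∂(Measure.pi fun _ : Fin (m + 1) => gaussianReal 0 1)
          ∂(Measure.pi fun _ : Fin m => G) ∂G := by
        refine lintegral_congr fun t => lintegral_congr fun θ' => ?_
        have hh : Measurable fun zv : Fin (m + 1) → ℝ => ENNReal.ofReal
            ((Δ (fun j => ins i t θ' j + σ * zv j) i - t) ^ 2) := by fun_prop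
        have e1 : ∫⁻ p, (fun zv : Fin (m + 1) → ℝ => ENNReal.ofReal
              ((Δ (fun j => ins i t θ' j + σ * zv j) i - t) ^ 2)) (ins i p.1 p.2)
            ∂((gaussianReal 0 1 : Measure ℝ).prod
              (Measure.pi fun _ : Fin m => (gaussianReal 0 1 : Measure ℝ)))
            = ∫⁻ zv, ENNReal.ofReal ((Δ (fun j => ins i t θ' j + σ * zv j) i - t) ^ 2)
              ∂(Measure.pi fun _ : Fin (m + 1) => gaussianReal 0 1) :=
          hsymmZ.lintegral_comp hh
        have e2 : ∫⁻ p, (fun zv : Fin (m + 1) → ℝ => ENNReal.ofReal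
              ((Δ (fun j => ins i t θ' j + σ * zv j) i - t) ^ 2)) (ins i p.1 p.2)
            ∂((gaussianReal 0 1 : Measure ℝ).prod
              (Measure.pi fun _ : Fin m => (gaussianReal 0 1 : Measure ℝ)))
            = ∫⁻ z, ∫⁻ z', (fun zv : Fin (m + 1) → ℝ => ENNReal.ofReal
              ((Δ (fun j => ins i t θ' j + σ * zv j) i - t) ^ 2)) (ins i z z')
              ∂(Measure.pi fun _ : Fin m => (gaussianReal 0 1 : Measure ℝ))
              ∂(gaussianReal 0 1) :=
          lintegral_prod _ ((hh.comp hins) :).aemeasurable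
        rw [← e1, e2]
        refine lintegral_congr fun z => lintegral_congr fun z' => ?_
        simp only [harg t θ' z z']
    _ = ∫⁻ t, ∫⁻ θ', (fun θv : Fin (m + 1) → ℝ =>
          ∫⁻ zv, ENNReal.ofReal ((Δ (fun j => θv j + σ * zv j) i - θv i) ^ 2)
          ∂(Measure.pi fun _ : Fin (m + 1) => gaussianReal 0 1)) (ins i t θ')
          ∂(Measure.pi fun _ : Fin m => G) ∂G := by
        refine lintegral_congr fun t => lintegral_congr fun θ' => ?_
        simp only [ins_same]
    _ = ∫⁻ θv, ∫⁻ zv, ENNReal.ofReal ((Δ (fun j => θv j + σ * zv j) i - θv i) ^ 2)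
          ∂(Measure.pi fun _ : Fin (m + 1) => gaussianReal 0 1)
          ∂(Measure.pi fun _ : Fin (m + 1) => G) := by
        have e2 : ∫⁻ p, (fun θv : Fin (m + 1) → ℝ =>
              ∫⁻ zv, ENNReal.ofReal ((Δ (fun j => θv j + σ * zv j) i - θv i) ^ 2)
              ∂(Measure.pi fun _ : Fin (m + 1) => gaussianReal 0 1)) (ins i p.1 p.2)
            ∂((G : Measure ℝ).prod (Measure.pi fun _ : Fin m => G))
            = ∫⁻ t, ∫⁻ θ', (fun θv : Fin (m + 1) → ℝ =>
              ∫⁻ zv, ENNReal.ofReal ((Δ (fun j => θv j + σ * zv j) i - θv i) ^ 2)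
              ∂(Measure.pi fun _ : Fin (m + 1) => gaussianReal 0 1)) (ins i t θ')
              ∂(Measure.pi fun _ : Fin m => G) ∂G :=
          lintegral_prod _ ((hg.comp hins) :).aemeasurable
        rw [← e2]
        exact hsymmG.lintegral_comp hg

lemma pi_map_eval {n : ℕ} (G : Measure ℝ) [IsProbabilityMeasure G] (i : Fin n) :
    (Measure.pi fun _ : Fin n => G).map (fun θv => θv i) = G := by
  ext s hs
  rw [Measure.map_apply (measurable_pi_apply i) hs]
  have hpre : (fun θv : Fin n → ℝ => θv i) ⁻¹' s
      = Set.pi univ (Function.update (fun _ : Fin n => (univ : Set ℝ)) i s) := by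
    ext x
    simp only [mem_preimage, mem_pi, mem_univ, forall_true_left]
    constructor
    · intro hx j
      rcases eq_or_ne j i with rfl | hj
      · simpa using hx
      · simp [Function.update_of_ne hj]
    · intro h
      have := h i
      simpa using this
  rw [hpre, Measure.pi_pi]
  rw [Finset.prod_eq_single i (fun j _ hj => by simp [Function.update_of_ne hj])
    (by simp)]
  simp


end NatureMaxmin

open NatureMaxmin

set_option maxHeartbeats 1000000 in
/-- **Nature's maxmin bound in the compound decision game**: let `𝒢` be the class of joint
laws of `(θ₁, …, θₙ)` with values in `[−c,c]ⁿ` whose mean empirical distribution equals `G`,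
and given `(θ₁, …, θₙ)` let `Yᵢ = θᵢ + σZᵢ` with `Zᵢ` i.i.d. standard normal. The i.i.d.-`G`
law belongs to `𝒢`, and for every measurable rule `Δ`, the supremum over `Q ∈ 𝒢` of the
compound risk is at least the i.i.d.-`G` Bayes risk `E_{iid G}[(δ_G(Y₁) − θ₁)²]`. -/
theorem nature_maxmin_bound (σ c : ℝ) (hσ : 0 < σ) (hc : 0 < c)
    (n : ℕ) (hn : 0 < n)
    (G : Measure ℝ) [IsProbabilityMeasure G] (hG : ∀ᵐ t ∂G, t ∈ Icc (-c) c)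
    (𝒢 : Set (Measure (Fin n → ℝ)))
    (h𝒢 : 𝒢 = {Q | IsProbabilityMeasure Q ∧ (∀ᵐ θv ∂Q, ∀ i, θv i ∈ Icc (-c) c) ∧
      (n : ENNReal)⁻¹ • ∑ i, Q.map (fun θv => θv i) = G})
    (risk : Measure (Fin n → ℝ) → ((Fin n → ℝ) → Fin n → ℝ) → ENNReal)
    (hrisk : risk = fun Q Δ => ∫⁻ θv,
      (∫⁻ zv, ENNReal.ofReal
          ((1 / n : ℝ) * ∑ i, (Δ (fun j => θv j + σ * zv j) i - θv i) ^ 2)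
        ∂(Measure.pi fun _ : Fin n => gaussianReal 0 1)) ∂Q)
    (bayesRiskG : ENNReal)
    (hBayes : bayesRiskG = ∫⁻ t,
      (∫⁻ z, ENNReal.ofReal ((postMean σ G (t + σ * z) - t) ^ 2) ∂(gaussianReal 0 1)) ∂G) :
    (Measure.pi fun _ : Fin n => G) ∈ 𝒢 ∧
    ∀ Δ : (Fin n → ℝ) → Fin n → ℝ, Measurable Δ →
      bayesRiskG ≤ ⨆ Q ∈ 𝒢, risk Q Δ := by
  subst h𝒢 hrisk hBayes
  have hmem : (Measure.pi fun _ : Fin n => G) ∈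
      {Q : Measure (Fin n → ℝ) | IsProbabilityMeasure Q ∧
        (∀ᵐ θv ∂Q, ∀ i, θv i ∈ Icc (-c) c) ∧
        (n : ENNReal)⁻¹ • ∑ i, Q.map (fun θv => θv i) = G} := by
    refine ⟨inferInstance, ?_, ?_⟩
    · have hIcc : G (Icc (-c) c) = 1 := by
        rw [← prob_compl_eq_zero_iff measurableSet_Icc]
        rw [ae_iff] at hG
        exact hG
      have hcompl : (Measure.pi fun _ : Fin n => G)
          (Set.pi univ fun _ : Fin n => Icc (-c) c)ᶜ = 0 := by
        rw [prob_compl_eq_zero_iff (MeasurableSet.univ_pi fun _ => measurableSet_Icc),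
          Measure.pi_pi]
        simp [hIcc]
      rw [ae_iff]
      refine measure_mono_null ?_ hcompl
      intro θv hθv
      simp only [mem_setOf_eq, mem_compl_iff, mem_pi, mem_univ, forall_true_left] at *
      tauto
    · have hmap : ∀ i : Fin n, (Measure.pi fun _ : Fin n => G).map (fun θv => θv i) = G :=
        fun i => pi_map_eval G i
      simp_rw [hmap]
      rw [Finset.sum_const, Finset.card_univ, Fintype.card_fin]
      rw [← Nat.cast_smul_eq_nsmul ℝ≥0∞, smul_smul, ENNReal.inv_mul_cancel
        (Nat.cast_ne_zero.2 hn.ne') (ENNReal.natCast_ne_top n), one_smul]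
  refine ⟨hmem, fun Δ hΔ => ?_⟩
  refine le_trans ?_ (le_biSup _ hmem)
  -- per-coordinate decomposition
  obtain ⟨m, rfl⟩ : ∃ m, n = m + 1 := ⟨n - 1, (Nat.succ_pred_eq_of_pos hn).symm⟩
  set B := ∫⁻ t, ∫⁻ z, ENNReal.ofReal ((postMean σ G (t + σ * z) - t) ^ 2)
      ∂(gaussianReal 0 1) ∂G with hB
  have hjoint : ∀ i : Fin (m + 1),
      Measurable fun p : (Fin (m + 1) → ℝ) × (Fin (m + 1) → ℝ) =>
        ENNReal.ofReal ((Δ (fun j => p.1 j + σ * p.2 j) i - p.1 i) ^ 2) := fun i => by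
    fun_prop
  have hnR : (0:ℝ) < ((m + 1 : ℕ) : ℝ) := by positivity
  have hR : (∫⁻ θv, ∫⁻ zv, ENNReal.ofReal ((1 / ((m + 1 : ℕ) : ℝ))
        * ∑ i, (Δ (fun j => θv j + σ * zv j) i - θv i) ^ 2)
        ∂(Measure.pi fun _ : Fin (m + 1) => gaussianReal 0 1)
        ∂(Measure.pi fun _ : Fin (m + 1) => G))
      = ENNReal.ofReal (1 / ((m + 1 : ℕ) : ℝ)) * ∑ i,
        ∫⁻ θv, ∫⁻ zv, ENNReal.ofReal ((Δ (fun j => θv j + σ * zv j) i - θv i) ^ 2)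
          ∂(Measure.pi fun _ : Fin (m + 1) => gaussianReal 0 1)
          ∂(Measure.pi fun _ : Fin (m + 1) => G) := by
    have h1 : ∀ θv : Fin (m + 1) → ℝ,
        (∫⁻ zv, ENNReal.ofReal ((1 / ((m + 1 : ℕ) : ℝ))
          * ∑ i, (Δ (fun j => θv j + σ * zv j) i - θv i) ^ 2)
          ∂(Measure.pi fun _ : Fin (m + 1) => gaussianReal 0 1))
        = ENNReal.ofReal (1 / ((m + 1 : ℕ) : ℝ)) * ∑ i,
          ∫⁻ zv, ENNReal.ofReal ((Δ (fun j => θv j + σ * zv j) i - θv i) ^ 2)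
            ∂(Measure.pi fun _ : Fin (m + 1) => gaussianReal 0 1) := by
      intro θv
      have hmz : ∀ i : Fin (m + 1), Measurable fun zv : Fin (m + 1) → ℝ =>
          ENNReal.ofReal ((Δ (fun j => θv j + σ * zv j) i - θv i) ^ 2) := fun i =>
        (hjoint i).comp (measurable_const.prodMk measurable_id)
      calc ∫⁻ zv, ENNReal.ofReal ((1 / ((m + 1 : ℕ) : ℝ))
            * ∑ i, (Δ (fun j => θv j + σ * zv j) i - θv i) ^ 2)
            ∂(Measure.pi fun _ : Fin (m + 1) => gaussianReal 0 1)
          = ∫⁻ zv, ENNReal.ofReal (1 / ((m + 1 : ℕ) : ℝ)) * ∑ i,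
              ENNReal.ofReal ((Δ (fun j => θv j + σ * zv j) i - θv i) ^ 2)
              ∂(Measure.pi fun _ : Fin (m + 1) => gaussianReal 0 1) := by
            refine lintegral_congr fun zv => ?_
            rw [ENNReal.ofReal_mul (by positivity),
              ENNReal.ofReal_sum_of_nonneg (fun i _ => sq_nonneg _)]
        _ = ENNReal.ofReal (1 / ((m + 1 : ℕ) : ℝ)) * ∑ i,
              ∫⁻ zv, ENNReal.ofReal ((Δ (fun j => θv j + σ * zv j) i - θv i) ^ 2)
              ∂(Measure.pi fun _ : Fin (m + 1) => gaussianReal 0 1) := by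
            rw [lintegral_const_mul _ (Finset.measurable_sum _ fun i _ => hmz i),
              lintegral_finset_sum _ fun i _ => hmz i]
    calc (∫⁻ θv, ∫⁻ zv, ENNReal.ofReal ((1 / ((m + 1 : ℕ) : ℝ))
          * ∑ i, (Δ (fun j => θv j + σ * zv j) i - θv i) ^ 2)
          ∂(Measure.pi fun _ : Fin (m + 1) => gaussianReal 0 1)
          ∂(Measure.pi fun _ : Fin (m + 1) => G))
        = ∫⁻ θv, ENNReal.ofReal (1 / ((m + 1 : ℕ) : ℝ)) * ∑ i,
            ∫⁻ zv, ENNReal.ofReal ((Δ (fun j => θv j + σ * zv j) i - θv i) ^ 2)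
            ∂(Measure.pi fun _ : Fin (m + 1) => gaussianReal 0 1)
            ∂(Measure.pi fun _ : Fin (m + 1) => G) := lintegral_congr h1
      _ = ENNReal.ofReal (1 / ((m + 1 : ℕ) : ℝ)) * ∑ i,
            ∫⁻ θv, ∫⁻ zv, ENNReal.ofReal ((Δ (fun j => θv j + σ * zv j) i - θv i) ^ 2)
            ∂(Measure.pi fun _ : Fin (m + 1) => gaussianReal 0 1)
            ∂(Measure.pi fun _ : Fin (m + 1) => G) := by
          rw [lintegral_const_mul _ (Finset.measurable_sum _ fun i _ =>
              (hjoint i).lintegral_prod_right'),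
            lintegral_finset_sum _ fun i _ => (hjoint i).lintegral_prod_right']
  have hofn : ENNReal.ofReal (1 / ((m + 1 : ℕ) : ℝ)) = (((m + 1 : ℕ) : ℝ≥0∞))⁻¹ := by
    rw [one_div, ENNReal.ofReal_inv_of_pos hnR, ENNReal.ofReal_natCast]
  calc B = (((m + 1 : ℕ) : ℝ≥0∞))⁻¹ * (((m + 1 : ℕ) : ℝ≥0∞) * B) := by
        rw [← mul_assoc, ENNReal.inv_mul_cancel (Nat.cast_ne_zero.2 (Nat.succ_ne_zero m))
          (ENNReal.natCast_ne_top _), one_mul]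
    _ = (((m + 1 : ℕ) : ℝ≥0∞))⁻¹ * ∑ _i : Fin (m + 1), B := by
        rw [Finset.sum_const, Finset.card_univ, Fintype.card_fin, nsmul_eq_mul]
    _ ≤ (((m + 1 : ℕ) : ℝ≥0∞))⁻¹ * ∑ i,
          ∫⁻ θv, ∫⁻ zv, ENNReal.ofReal ((Δ (fun j => θv j + σ * zv j) i - θv i) ^ 2)
          ∂(Measure.pi fun _ : Fin (m + 1) => gaussianReal 0 1)
          ∂(Measure.pi fun _ : Fin (m + 1) => G) := by
        refine mul_le_mul_right (Finset.sum_le_sum fun i _ => ?_) _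
        exact coord_bound hσ hc G hG i Δ hΔ
    _ = ∫⁻ θv, ∫⁻ zv, ENNReal.ofReal ((1 / ((m + 1 : ℕ) : ℝ))
          * ∑ i, (Δ (fun j => θv j + σ * zv j) i - θv i) ^ 2)
          ∂(Measure.pi fun _ : Fin (m + 1) => gaussianReal 0 1)
          ∂(Measure.pi fun _ : Fin (m + 1) => G) := by
        rw [hR, hofn]
end
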